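/- arXiv:1810.09345 — 2 statements merged into one kernel-verified Lean document; each statement's English description precedes it below -/
import Mathlib

section
/- Let R be a Łukasiewicz near semiring with involution α. Define p(x,y,z) = α((α(x·α(y))·α(z)) + (α(z·α(y))·α(x))). Then p is a Mal'cev term: p(x,y,y) = x and p(x,x,y) = y for all x, y ∈ R. (Consequently the variety of Łukasiewicz near semirings is congruence permutable.) -/
/-- A near semiring: ⟨R, +, ·, 0, 1⟩ with ⟨R, +, 0⟩ a commutative monoid,
⟨R, ·, 1⟩ a unital groupoid, right distributivity, and 0 annihilating. -/
structure NearSemiring (R : Type*) where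
  add : R → R → R
  mul : R → R → R
  zero : R
  one : R
  add_assoc : ∀ x y z : R, add (add x y) z = add x (add y z)
  add_comm : ∀ x y : R, add x y = add y x
  add_zero : ∀ x : R, add x zero = x
  mul_one : ∀ x : R, mul x one = x
  one_mul : ∀ x : R, mul one x = x
  right_distrib : ∀ x y z : R, mul (add x y) z = add (mul x z) (mul y z)
  mul_zero : ∀ x : R, mul x zero = zero
  zero_mul : ∀ x : R, mul zero x = zero

/-- The induced relation: x ≤ y iff x + y = y. -/
def NearSemiring.le {R : Type*} (S : NearSemiring R) (x y : R) : Prop :=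
  S.add x y = y

/-- An involutive near semiring: an idempotent near semiring with an
antitone involution α (antitone w.r.t. the order x ≤ y iff x + y = y). -/
structure InvNearSemiring (R : Type*) extends NearSemiring R where
  add_idem : ∀ x : R, add x x = x
  alpha : R → R
  alpha_alpha : ∀ x : R, alpha (alpha x) = x
  alpha_antitone : ∀ x y : R, add x y = y → add (alpha y) (alpha x) = alpha x

/-- A Łukasiewicz near semiring: an involutive near semiring satisfying (Ł). -/
structure LukNearSemiring (R : Type*) extends InvNearSemiring R where
  luk : ∀ x y : R,
    mul (alpha (mul x (alpha y))) (alpha y) = mul (alpha (mul y (alpha x))) (alpha x)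

/-!
Instantiating (Ł) at `(0, 1)` gives `α0·α1 = 0`, and at `(α1, αz)` it gives `α(α1·z)·z = z`,
hence `z ≤ α0·z` for every `z`; taking `z = α1` yields `α1 = 0`.
Consequently `x·αx = 0`, `α0 = 1`, and every element lies below `1`. In `p(x, y, y)` the second summand
is then `αx`, while (Ł) turns the first one into `α(y·αx)·αx ≤ 1·αx`; so the sum is `αx` and
`p(x, y, y) = x`. The identity `p(x, x, y) = y` is the mirror image.
-/

namespace NearSemiring

variable {R : Type*} (S : NearSemiring R)

lemma mul_le_mul_right {a b : R} (h : S.le a b) (c : R) : S.le (S.mul a c) (S.mul b c) := by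
  rw [le, ← S.right_distrib, h]

lemma mul_le_of_le_one_left {a : R} (h : S.le a S.one) (c : R) : S.le (S.mul a c) c := by
  simpa only [S.one_mul] using S.mul_le_mul_right h c

end NearSemiring

namespace InvNearSemiring

variable {R : Type*} (S : InvNearSemiring R)

lemma le_alpha_zero (x : R) : S.le x (S.alpha S.zero) := by
  have h := S.alpha_antitone S.zero (S.alpha x) (by rw [S.add_comm, S.add_zero])
  rwa [S.alpha_alpha] at h

end InvNearSemiring

namespace LukNearSemiring

variable {R : Type*} (S : LukNearSemiring R)

lemma alpha_one : S.alpha S.one = S.zero := by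
  set e := S.alpha S.one
  have top_mul_e : S.mul (S.alpha S.zero) e = S.zero := by
    simpa only [S.zero_mul, S.one_mul, S.alpha_alpha] using S.luk S.zero S.one
  have cancel : ∀ z : R, S.mul (S.alpha (S.mul e z)) z = z := fun z => by
    simpa only [e, S.alpha_alpha, S.mul_one] using S.luk e (S.alpha z)
  have le_top_mul : ∀ z : R, S.le z (S.mul (S.alpha S.zero) z) := fun z => by
    simpa only [cancel] using
      S.mul_le_mul_right (S.le_alpha_zero (S.alpha (S.mul e z))) z
  simpa only [NearSemiring.le, top_mul_e, S.add_zero] using le_top_mul e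

lemma alpha_zero : S.alpha S.zero = S.one := by
  rw [← alpha_one S, S.alpha_alpha]

lemma le_one (x : R) : S.le x S.one :=
  S.alpha_zero ▸ S.le_alpha_zero x

lemma mul_alpha_self (x : R) : S.mul x (S.alpha x) = S.zero := by
  simpa only [alpha_zero, S.one_mul, S.alpha_alpha, alpha_one, S.mul_zero, S.zero_mul] using
    S.luk (S.alpha S.zero) x

lemma alpha_mul_alpha_mul_alpha_le_alpha (x y : R) :
    S.le (S.mul (S.alpha (S.mul x (S.alpha y))) (S.alpha y)) (S.alpha x) := by
  rw [S.luk]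
  exact S.mul_le_of_le_one_left (S.le_one _) _

end LukNearSemiring

/-- The term p(x,y,z) = α((α(x·α(y))·α(z)) + (α(z·α(y))·α(x))) is a Mal'cev
term for Łukasiewicz near semirings: p(x,y,y) = x and p(x,x,y) = y. -/
theorem lukNearSemiring_malcev {R : Type*} (S : LukNearSemiring R) :
    (∀ x y : R,
      S.alpha (S.add (S.mul (S.alpha (S.mul x (S.alpha y))) (S.alpha y))
                     (S.mul (S.alpha (S.mul y (S.alpha y))) (S.alpha x))) = x) ∧
    (∀ x y : R,
      S.alpha (S.add (S.mul (S.alpha (S.mul x (S.alpha x))) (S.alpha y))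
                     (S.mul (S.alpha (S.mul y (S.alpha x))) (S.alpha x))) = y) := by
  constructor
  · intro x y
    rw [S.mul_alpha_self y, S.alpha_zero, S.one_mul,
      S.alpha_mul_alpha_mul_alpha_le_alpha x y, S.alpha_alpha]
  · intro x y
    rw [S.mul_alpha_self x, S.alpha_zero, S.one_mul, S.add_comm,
      S.alpha_mul_alpha_mul_alpha_le_alpha y x, S.alpha_alpha]
end

section
/- Let R be an orthomodular near semiring with involution α. Then for all x, y ∈ R: (a) x·x = x; (b) x = x·α(α(y·α(x))·α(x)); (c) x + α(x) = 1; (d) if x ≤ y (i.e., x + y = y) then x·y = x. -/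
/-- An orthomodular near semiring: a Łukasiewicz near semiring with x = x·(x+y). -/
structure OMNearSemiring (R : Type*) extends LukNearSemiring R where
  om : ∀ x y : R, x = mul x (add x y)

namespace NearSemiring

variable {R : Type*} (S : NearSemiring R)

theorem zero_add (x : R) : S.add S.zero x = x := by
  rw [S.add_comm, S.add_zero]

theorem le_trans {x y z : R} (hxy : S.le x y) (hyz : S.le y z) : S.le x z := by
  unfold le at *
  rw [← hyz, ← S.add_assoc, hxy]

end NearSemiring

namespace InvNearSemiring

variable {R : Type*} (S : InvNearSemiring R)

theorem le_add_left (x y : R) : S.le x (S.add x y) := by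
  rw [NearSemiring.le, ← S.add_assoc, S.add_idem]

theorem le_add_right (x y : R) : S.le y (S.add x y) := by
  rw [S.add_comm x y]
  exact S.le_add_left y x

theorem alpha_le_alpha {x y : R} (h : S.le x y) : S.le (S.alpha y) (S.alpha x) :=
  S.alpha_antitone x y h

theorem le_alpha_comm {x y : R} (h : S.le x (S.alpha y)) : S.le y (S.alpha x) := by
  simpa only [S.alpha_alpha] using S.alpha_le_alpha h

end InvNearSemiring

namespace OMNearSemiring

variable {R : Type*} (S : OMNearSemiring R)

theorem mul_eq_left_of_le {x y : R} (h : S.le x y) : S.mul x y = x := by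
  conv_rhs => rw [S.om x y, show S.add x y = y from h]

theorem mul_self (x : R) : S.mul x x = x :=
  S.mul_eq_left_of_le (S.add_idem x)

theorem alpha_zero : S.alpha S.zero = S.one := by
  have h : S.le S.one (S.alpha S.zero) :=
    S.le_alpha_comm (S.toNearSemiring.zero_add (S.alpha S.one))
  rw [← S.mul_eq_left_of_le h, S.one_mul]

theorem alpha_one : S.alpha S.one = S.zero := by
  rw [← S.alpha_zero, S.alpha_alpha]

theorem mul_alpha_self (x : R) : S.mul x (S.alpha x) = S.zero := by
  simpa only [S.one_mul, S.alpha_alpha, S.alpha_one, S.mul_zero] using S.luk S.one x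

theorem add_alpha_self (x : R) : S.add x (S.alpha x) = S.one := by
  set t := S.add x (S.alpha x)
  have halpha_le : S.le (S.alpha t) t :=
    S.toNearSemiring.le_trans (S.alpha_le_alpha (S.le_add_left x (S.alpha x)))
      (S.le_add_right x (S.alpha x))
  have halpha_zero : S.alpha t = S.zero := by
    rw [← S.mul_eq_left_of_le halpha_le]
    simpa only [S.alpha_alpha] using S.mul_alpha_self (S.alpha t)
  rw [← S.alpha_alpha t, halpha_zero, S.alpha_zero]

theorem le_one (x : R) : S.le x S.one := by
  rw [← S.add_alpha_self x]
  exact S.le_add_left x (S.alpha x)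

theorem mul_le (x y : R) : S.le (S.mul x y) y := by
  have h := S.right_distrib x S.one y
  rwa [show S.add x S.one = S.one from S.le_one x, S.one_mul, eq_comm] at h

theorem mul_alpha_eq_of_le_alpha {x c : R} (h : S.le c (S.alpha x)) :
    S.mul x (S.alpha c) = x :=
  S.mul_eq_left_of_le (S.le_alpha_comm h)

end OMNearSemiring

/-- Basic arithmetic of orthomodular near semirings. -/
theorem omNearSemiring_arith {R : Type*} (S : OMNearSemiring R) :
    -- (a) x·x = x
    (∀ x : R, S.mul x x = x) ∧
    -- (b) x = x·α(α(y·α(x))·α(x))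
    (∀ x y : R,
      x = S.mul x (S.alpha (S.mul (S.alpha (S.mul y (S.alpha x))) (S.alpha x)))) ∧
    -- (c) x + α(x) = 1
    (∀ x : R, S.add x (S.alpha x) = S.one) ∧
    -- (d) x ≤ y implies x·y = x
    (∀ x y : R, S.add x y = y → S.mul x y = x) :=
  ⟨S.mul_self, fun _ _ => (S.mul_alpha_eq_of_le_alpha (S.mul_le _ _)).symm, S.add_alpha_self,
    fun _ _ => S.mul_eq_left_of_le⟩
end
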